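/- Fix m ≥ 2. Define a sequence (m_d)_{d≥0} in Q(v) by m_0 = 1 and the recursion m_d = ([P^{(m−1)d}]/[P^{d−1}]) · Σ_{d_1+⋯+d_{m−1}=d−1} v^{Σ_i (m−2i)d_i} Π_i m_{d_i}, where [P^n] = (v^{n+1} − v^{−n−1})/(v − v^{−1}) denotes the quantum integer n+1. Then the generating series F(t) = Σ_d m_d t^d satisfies the v-difference equation ΔF(t) = ∇^{(m−1)}(t·Π_{i=1}^{m−1} F(v^{m−2i} t)). -/

import Mathlib

open PowerSeries Finset

noncomputable section

/-- The field `ℚ(v)` of rational functions. -/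
abbrev K : Type := RatFunc ℚ

/-- The variable `v`. -/
def v : K := RatFunc.X

/-- `scale a B` is the series `B(v^a t)`: the `t^d`-coefficient is multiplied by `v^(a*d)`. -/
def scale (a : ℤ) (B : PowerSeries K) : PowerSeries K :=
  PowerSeries.mk fun d => v ^ (a * d) * PowerSeries.coeff d B

/-- `(ΔB)(t) = (B(vt) - B(v⁻¹t))/(v - v⁻¹)`. -/
def delta (B : PowerSeries K) : PowerSeries K :=
  PowerSeries.C ((v - v⁻¹)⁻¹) * (scale 1 B - scale (-1) B)

/-- `(∇^(k)B)(t) = (v·B(v^k t) - v⁻¹·B(v^{-k} t))/(v - v⁻¹)`. -/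
def nabla (k : ℤ) (B : PowerSeries K) : PowerSeries K :=
  PowerSeries.C ((v - v⁻¹)⁻¹) *
    (PowerSeries.C v * scale k B - PowerSeries.C v⁻¹ * scale (-k) B)

/-- The virtual motive of projective space `ℙ^n`: the quantum integer
`v^n + v^(n-2) + ⋯ + v^(-n) = (v^(n+1) - v^(-n-1))/(v - v⁻¹)`. -/
def qP (n : ℕ) : K := (v ^ ((n : ℤ) + 1) - v ^ (-(n : ℤ) - 1)) / (v - v⁻¹)

/-!
Both sides are compared coefficientwise. `Δ` multiplies the `t^d`-coefficient by `[P^(d-1)]`,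
`∇^(k)` multiplies it by `[P^(kd)]`, and the `t^(d-1)`-coefficient of `∏ᵢ F(v^(m-2i) t)` is
exactly the sum in the recursion. So at `t^d` the equation is the recursion multiplied by
`[P^(d-1)] ≠ 0` (nonzero because `v` is transcendental), and both constant terms vanish.
-/

theorem zpow_sum₀ {G₀ ι : Type*} [CommGroupWithZero G₀] {a : G₀} (ha : a ≠ 0) (s : Finset ι)
    (e : ι → ℤ) : a ^ (∑ i ∈ s, e i) = ∏ i ∈ s, a ^ e i := by
  classical
  induction s using Finset.cons_induction with
  | empty => simp
  | cons i s hi ih => rw [sum_cons, prod_cons, zpow_add₀ ha, ih]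

theorem PowerSeries.coeff_prod_univ_fin {R : Type*} [CommSemiring R] (k n : ℕ)
    (g : Fin k → PowerSeries R) :
    coeff n (∏ i, g i) = ∑ f ∈ Nat.antidiagonalTuple k n, ∏ i, coeff (f i) (g i) := by
  rw [coeff_prod]
  refine sum_nbij' (fun l => (l : Fin k → ℕ)) (fun f => Finsupp.equivFunOnFinite.symm f)
    ?_ ?_ (fun l _ => Finsupp.equivFunOnFinite.symm_apply_apply l)
    (fun f _ => Finsupp.equivFunOnFinite.apply_symm_apply f) (fun _ _ => rfl)
  · intro l hl
    simp only [mem_finsuppAntidiag] at hl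
    simp [Nat.mem_antidiagonalTuple, ← hl.1]
  · intro f hf
    simp only [Nat.mem_antidiagonalTuple] at hf
    simp [mem_finsuppAntidiag, ← hf]

theorem v_ne_zero : v ≠ 0 := RatFunc.X_ne_zero

theorem v_pow_ne_one {n : ℕ} (hn : n ≠ 0) : v ^ n ≠ 1 := by
  intro h
  have hX : (Polynomial.X : Polynomial ℚ) ^ n = 1 := by
    apply RatFunc.algebraMap_injective ℚ
    simpa [v, RatFunc.algebraMap_X] using h
  simpa [hn] using congrArg Polynomial.natDegree hX

theorem v_zpow_sub_zpow_neg_ne_zero {n : ℕ} (hn : n ≠ 0) : v ^ (n : ℤ) - v ^ (-(n : ℤ)) ≠ 0 := by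
  rw [sub_ne_zero]
  intro h
  apply v_pow_ne_one (n := n + n) (by omega)
  rw [pow_add, ← zpow_natCast]
  nth_rewrite 1 [h]
  rw [zpow_neg, inv_mul_cancel₀ (zpow_ne_zero _ v_ne_zero)]

theorem v_sub_v_inv_ne_zero : v - v⁻¹ ≠ 0 := by
  simpa using v_zpow_sub_zpow_neg_ne_zero one_ne_zero

theorem qP_ne_zero (n : ℕ) : qP n ≠ 0 := by
  refine div_ne_zero ?_ v_sub_v_inv_ne_zero
  have h := v_zpow_sub_zpow_neg_ne_zero n.succ_ne_zero
  rwa [Nat.cast_succ, neg_add'] at h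

@[simp]
theorem coeff_scale (a : ℤ) (B : PowerSeries K) (d : ℕ) :
    coeff d (scale a B) = v ^ (a * d) * coeff d B := by
  simp [scale]

theorem coeff_zero_delta (B : PowerSeries K) : coeff 0 (delta B) = 0 := by
  simp only [delta, coeff_C_mul, map_sub, coeff_scale]
  simp

theorem coeff_succ_delta (B : PowerSeries K) (n : ℕ) :
    coeff (n + 1) (delta B) = qP n * coeff (n + 1) B := by
  simp only [delta, qP, coeff_C_mul, map_sub, coeff_scale, one_mul, neg_one_mul]
  push_cast
  rw [neg_add']
  ring

theorem coeff_nabla (k d : ℕ) (B : PowerSeries K) :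
    coeff d (nabla k B) = qP (k * d) * coeff d B := by
  simp only [nabla, qP, coeff_C_mul, map_sub, coeff_scale]
  push_cast
  rw [zpow_add₀ v_ne_zero, zpow_sub₀ v_ne_zero, zpow_one, neg_mul]
  ring

theorem coeff_prod_Icc_scale (k n : ℕ) (a : ℕ → ℤ) (B : PowerSeries K) :
    coeff n (∏ i ∈ Icc 1 k, scale (a i) B) =
      ∑ f ∈ Nat.antidiagonalTuple k n,
        v ^ (∑ i : Fin k, a (i + 1) * f i) * ∏ i : Fin k, coeff (f i) B := by
  rw [← Ico_add_one_right_eq_Icc, prod_Ico_eq_prod_range, Nat.add_sub_cancel,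
    ← Fin.prod_univ_eq_prod_range (fun i => scale (a (1 + i)) B), coeff_prod_univ_fin]
  refine sum_congr rfl fun f _ => ?_
  simp only [coeff_scale, prod_mul_distrib, zpow_sum₀ v_ne_zero, add_comm 1]

theorem recursion_vdifference_general (m : ℕ) (hm : 2 ≤ m) (ms : ℕ → K)
    (hrec : ∀ d : ℕ, 1 ≤ d →
      ms d = qP ((m - 1) * d) / qP (d - 1) *
        ∑ f ∈ Finset.Nat.antidiagonalTuple (m - 1) (d - 1),
          v ^ (∑ i : Fin (m - 1), ((m : ℤ) - 2 * ((i : ℕ) + 1)) * (f i : ℤ)) *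
            ∏ i : Fin (m - 1), ms (f i)) :
    delta (PowerSeries.mk ms) = nabla ((m : ℤ) - 1)
      (PowerSeries.X *
        ∏ i ∈ Finset.Icc 1 (m - 1), scale ((m : ℤ) - 2 * (i : ℤ)) (PowerSeries.mk ms)) := by
  rw [← Nat.cast_pred (by omega)]
  ext (_ | n)
  · simp [coeff_zero_delta, coeff_nabla]
  · rw [coeff_succ_delta, coeff_nabla, coeff_succ_X_mul, coeff_prod_Icc_scale, coeff_mk,
      hrec (n + 1) n.succ_pos, Nat.add_sub_cancel, div_mul_eq_mul_div,
      mul_div_cancel₀ _ (qP_ne_zero n)]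
    simp only [coeff_mk, Nat.cast_add, Nat.cast_one]

/-- The sequence defined by the recursion of Corollary "practical" has generating
series satisfying the `v`-difference equation. -/
theorem recursion_vdifference (m : ℕ) (hm : 2 ≤ m) (ms : ℕ → K)
    (h0 : ms 0 = 1)
    (hrec : ∀ d : ℕ, 1 ≤ d →
      ms d = qP ((m - 1) * d) / qP (d - 1) *
        ∑ f ∈ Finset.Nat.antidiagonalTuple (m - 1) (d - 1),
          v ^ (∑ i : Fin (m - 1), ((m : ℤ) - 2 * ((i : ℕ) + 1)) * (f i : ℤ)) *
            ∏ i : Fin (m - 1), ms (f i)) :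
    delta (PowerSeries.mk ms) = nabla ((m : ℤ) - 1)
      (PowerSeries.X *
        ∏ i ∈ Finset.Icc 1 (m - 1), scale ((m : ℤ) - 2 * (i : ℤ)) (PowerSeries.mk ms)) :=
  recursion_vdifference_general m hm ms hrec
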